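/- Let S₀ = (1−x²)∂_x² + (1 − (2a+3)x)∂_x and L₀ = 2(1−x)∂_x R + 2(a+1)(1−R), where R is the reflection operator. Then L₀ and S₀ commute: L₀S₀ = S₀L₀ as operators on polynomials. -/

import Mathlib

/-!
Write `S₀ = (1-x²)∂² + (1-(2a+3)x)∂`, `T = (1-x)∂` and `R f(x) = f(-x)`. Conjugating by `R`
flips the sign of `∂` and of `x`, so `S₀ R = R (S₀ - 2∂)`, i.e. `[S₀, 1 - R] = 2R∂`. A direct
computation gives `[S₀, T] = -2(1-x)∂² + 2(a+1)∂`, and combining the two, `[S₀, T R] = 2(a+1)∂R`.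
Hence `[S₀, L₀] = 4(a+1)(∂R + R∂)`, which vanishes because `∂` anticommutes with `R`.
-/

open Polynomial

/-- The Sturm–Liouville operator `S₀ = (1-x²)∂ₓ² + (1-(2a+3)x)∂ₓ` on polynomials. -/
noncomputable def S0 (a : ℝ) (p : Polynomial ℝ) : Polynomial ℝ :=
  (1 - X ^ 2) * derivative (derivative p) + (1 - C (2 * a + 3) * X) * derivative p

/-- The Dunkl-type operator `L₀ = 2(1-x)∂ₓ R + 2(a+1)(1-R)` on polynomials,
where `R` is the reflection `(Rf)(x) = f(-x)`. -/
noncomputable def L0 (a : ℝ) (p : Polynomial ℝ) : Polynomial ℝ :=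
  (2 : ℝ) • ((1 - X) * derivative (p.comp (-X))) + (2 * (a + 1)) • (p - p.comp (-X))

namespace Polynomial

theorem derivative_comp_neg_X {R : Type*} [CommRing R] (p : R[X]) :
    derivative (p.comp (-X)) = -(derivative p).comp (-X) := by
  rw [derivative_comp, derivative_neg, derivative_X, neg_one_mul]

end Polynomial

section S0

variable (a : ℝ) (p q : ℝ[X])

theorem S0_add : S0 a (p + q) = S0 a p + S0 a q := by
  simp only [S0, derivative_add]
  ring

theorem S0_smul (c : ℝ) : S0 a (c • p) = c • S0 a p := by
  simp only [S0, derivative_smul, mul_smul_comm, smul_add]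

theorem S0_sub : S0 a (p - q) = S0 a p - S0 a q := by
  simp only [S0, derivative_sub]
  ring

theorem S0_comp_neg_X :
    S0 a (p.comp (-X)) = (S0 a p).comp (-X) - 2 * (derivative p).comp (-X) := by
  simp only [S0, derivative_comp_neg_X, derivative_neg, sub_comp, add_comp, mul_comp,
    one_comp, pow_comp, X_comp, C_comp, neg_sq]
  ring

theorem S0_sub_comp_neg_X :
    S0 a (p - p.comp (-X)) = S0 a p - (S0 a p).comp (-X) + 2 * (derivative p).comp (-X) := by
  rw [S0_sub, S0_comp_neg_X]
  ring

theorem S0_one_sub_X_mul_derivative :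
    S0 a ((1 - X) * derivative p) = (1 - X) * derivative (S0 a p)
      - 2 * (1 - X) * derivative (derivative p) + (2 * (a + 1)) • derivative p := by
  have hC : C (2 * a + 3) = C (2 * (a + 1)) + 1 := by rw [← C_1, ← C_add]; ring_nf
  simp only [S0, derivative_mul, derivative_add, derivative_sub, derivative_one, derivative_X,
    derivative_X_sq, derivative_C, derivative_zero, C_ofNat, hC, smul_eq_C_mul]
  ring

theorem S0_one_sub_X_mul_derivative_comp_neg_X :
    S0 a ((1 - X) * derivative (p.comp (-X))) =
      (1 - X) * derivative ((S0 a p).comp (-X)) + (2 * (a + 1)) • derivative (p.comp (-X)) := by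
  rw [S0_one_sub_X_mul_derivative, S0_comp_neg_X]
  simp only [derivative_sub, derivative_mul, derivative_ofNat, derivative_neg,
    derivative_comp_neg_X]
  ring

end S0

/-- `L₀` and `S₀` commute: `L₀ S₀ = S₀ L₀`. -/
theorem L0_commutes_with_S0 (a : ℝ) (p : Polynomial ℝ) :
    L0 a (S0 a p) = S0 a (L0 a p) := by
  rw [L0, L0, S0_add, S0_smul, S0_smul, S0_one_sub_X_mul_derivative_comp_neg_X, S0_sub_comp_neg_X,
    derivative_comp_neg_X p]
  simp only [smul_add, smul_sub, smul_eq_C_mul, C_ofNat]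
  ring
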